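/- Let ν > −1 and let k be a positive integer. Then lim_{β→∞} β^k · F^{(β)}(k, (β/2)(ν+1)) exists and equals M(−k,ν) := ∑_{η ⊢ k} A_η · ∏_{i=1}^{ℓ(η)} (i+ν)^{−η_i}, where for a partition η of k of length ℓ, A_η := 2^k · k · [(η_1−1)!/η_ℓ!] · (−1)^{k−η_1} · ∏_{i=2}^{ℓ}(i−1)^{η_i} · ∏_{i=1}^{ℓ−1}(ℓ−i)^{−η_i} · ∏_{i=1}^{ℓ}(ℓ−i+1)^{−η_i} · ∏_{i=2}^{ℓ} [1/(η_{i−1}−η_i)!] · ∏_{1≤p<q≤ℓ}(q−p+1)^{η_p−η_q} · ∏_{q=3}^{ℓ}∏_{p=1}^{q−2}(q−p−1)^{η_q−η_p}, with empty products equal to 1. -/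

import Mathlib

open Filter Finset

noncomputable section

/-- Descending (weakly decreasing) list of the parts of a partition. -/
def dparts {k : ℕ} (η : Nat.Partition k) : List ℕ := (η.parts.sort (· ≤ ·)).reverse

/-- The `i`-th part `η_i` (1-indexed) of a partition. -/
def npart {k : ℕ} (η : Nat.Partition k) (i : ℕ) : ℕ := (dparts η).getD (i - 1) 0

/-- The length `ℓ(η)` of a partition. -/
def plen {k : ℕ} (η : Nat.Partition k) : ℕ := Multiset.card η.parts

/-- Rising factorial `(x)_n = x(x+1)⋯(x+n−1)`. -/
noncomputable def rf (x : ℝ) (n : ℕ) : ℝ := ∏ m ∈ Finset.range n, (x + m)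

/-- `(x)_{−n} = 1/((x−1)(x−2)⋯(x−n))`. -/
noncomputable def rfneg (x : ℝ) (n : ℕ) : ℝ := (∏ m ∈ Finset.range n, (x - (m + 1)))⁻¹

/-- The factor `α_η^− = ∏_{i=1}^{ℓ(η)} (α+1+κ(i−1))_{−η_i}` with `κ = β/2`. -/
noncomputable def alphaMinus (β α : ℝ) {k : ℕ} (η : Nat.Partition k) : ℝ :=
  ∏ i ∈ Finset.Icc 1 (plen η), rfneg (α + 1 + (β / 2) * ((i : ℝ) - 1)) (npart η i)

/-- The large-`N` coefficient `A_η^{(β)}`. -/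
noncomputable def AcoefLim (β : ℝ) {k : ℕ} (η : Nat.Partition k) : ℝ :=
  let κ := β / 2
  let ℓ := plen η
  let e : ℕ → ℕ := npart η
  ((k : ℝ) * ((e 1 - 1).factorial : ℝ) * κ ^ k / rf (κ * ((ℓ : ℝ) - 1) + 1) (e 1)) *
  (∏ i ∈ Finset.Icc 2 ℓ, rf (κ * (1 - (i : ℝ))) (e i) / rf (κ * ((ℓ : ℝ) - i) + 1) (e i)) *
  (∏ i ∈ Finset.Icc 1 ℓ, (rf (κ * ((ℓ : ℝ) - i + 1)) (e i))⁻¹) *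
  (∏ j ∈ Finset.Icc 1 ℓ, ∏ i ∈ Finset.Ico 1 j,
    ((κ * ((j : ℝ) - i) + (e i : ℝ) - (e j : ℝ)) / (κ * ((j : ℝ) - i))) *
      (rf (κ * ((j : ℝ) - i + 1)) (e i - e j) / rf (κ * ((j : ℝ) - i - 1) + 1) (e i - e j)))

/-- The hard-edge limit `F^{(β)}(k,α) = ∑_{η ⊢ k} A_η^{(β)} α_η^−` of the rescaled
inverse moments. -/
noncomputable def Fbeta (β : ℝ) (k : ℕ) (α : ℝ) : ℝ :=
  ∑ η : Nat.Partition k, AcoefLim β η * alphaMinus β α η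

/-- The low-temperature coefficient `A_η`. -/
noncomputable def Ainf {k : ℕ} (η : Nat.Partition k) : ℝ :=
  let ℓ := plen η
  let e : ℕ → ℕ := npart η
  2 ^ k * (k : ℝ) * (((e 1 - 1).factorial : ℝ) / ((e ℓ).factorial : ℝ)) * (-1) ^ (k - e 1) *
  (∏ i ∈ Finset.Icc 2 ℓ, ((i : ℝ) - 1) ^ (e i)) *
  (∏ i ∈ Finset.Icc 1 (ℓ - 1), (((ℓ : ℝ) - i) ^ (e i))⁻¹) *
  (∏ i ∈ Finset.Icc 1 ℓ, (((ℓ : ℝ) - i + 1) ^ (e i))⁻¹) *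
  (∏ i ∈ Finset.Icc 2 ℓ, (((e (i - 1) - e i).factorial : ℝ))⁻¹) *
  (∏ q ∈ Finset.Icc 1 ℓ, ∏ p ∈ Finset.Ico 1 q, ((q : ℝ) - p + 1) ^ (e p - e q)) *
  (∏ q ∈ Finset.Icc 3 ℓ, ∏ p ∈ Finset.Icc 1 (q - 2),
    ((q : ℝ) - p - 1) ^ ((e q : ℤ) - (e p : ℤ)))

/-- The low-temperature limit `M(−k,ν) = ∑_{η ⊢ k} A_η ∏_i (i+ν)^{−η_i}`. -/
noncomputable def Mlim (k : ℕ) (ν : ℝ) : ℝ :=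
  ∑ η : Nat.Partition k, Ainf η *
    ∏ i ∈ Finset.Icc 1 (plen η), (((i : ℝ) + ν) ^ (npart η i))⁻¹

namespace LagAux

/-- normalized ascending factor -/
noncomputable def qp (c d : ℝ) (n : ℕ) (u : ℝ) : ℝ := ∏ m ∈ Finset.range n, (c + (d + m) * u)
/-- normalized descending factor -/
noncomputable def qm (c d : ℝ) (n : ℕ) (u : ℝ) : ℝ := ∏ m ∈ Finset.range n, (c + (d - m) * u)

lemma qp_zero (c d : ℝ) (n : ℕ) : qp c d n 0 = c ^ n := by simp [qp]
lemma qm_zero (c d : ℝ) (n : ℕ) : qm c d n 0 = c ^ n := by simp [qm]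

lemma continuous_qp (c d : ℝ) (n : ℕ) : Continuous (qp c d n) := by
  unfold qp; exact continuous_finset_prod _ fun m _ => by continuity

lemma continuous_qm (c d : ℝ) (n : ℕ) : Continuous (qm c d n) := by
  unfold qm; exact continuous_finset_prod _ fun m _ => by continuity

lemma prod_norm (c : ℝ) (g : ℕ → ℝ) (n : ℕ) {β : ℝ} (hβ : β ≠ 0) :
    ∏ m ∈ Finset.range n, (c * β + g m) = β ^ n * ∏ m ∈ Finset.range n, (c + g m * β⁻¹) := by
  rw [← Finset.card_range n, ← Finset.prod_const, Finset.card_range, ← Finset.prod_mul_distrib]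
  refine Finset.prod_congr rfl fun m _ => ?_
  field_simp

lemma rf_norm (c d : ℝ) (n : ℕ) {β : ℝ} (hβ : β ≠ 0) :
    rf (c * β + d) n = β ^ n * qp c d n β⁻¹ := by
  unfold rf qp
  rw [← prod_norm c (fun m => d + m) n hβ]
  exact Finset.prod_congr rfl fun m _ => by ring

lemma rfneg_norm (c d : ℝ) (n : ℕ) {β : ℝ} (hβ : β ≠ 0) :
    rfneg (c * β + d) n = (β ^ n * qm c (d - 1) n β⁻¹)⁻¹ := by
  unfold rfneg qm
  rw [← prod_norm c (fun m => d - 1 - m) n hβ]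
  congr 1
  exact Finset.prod_congr rfl fun m _ => by ring

lemma rf_one (n : ℕ) : rf 1 n = n.factorial := by
  unfold rf
  rw [← Finset.prod_range_add_one_eq_factorial n]
  push_cast
  exact Finset.prod_congr rfl fun m _ => by ring

lemma qp_degen (n : ℕ) (u : ℝ) : qp 0 1 n u = u ^ n * n.factorial := by
  unfold qp
  calc ∏ m ∈ Finset.range n, ((0:ℝ) + (1 + m) * u)
      = ∏ m ∈ Finset.range n, ((1 + (m:ℝ)) * u) := Finset.prod_congr rfl fun m _ => by ring
    _ = (∏ m ∈ Finset.range n, (1 + (m:ℝ))) * u ^ n := by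
        rw [Finset.prod_mul_distrib, Finset.prod_const, Finset.card_range]
    _ = u ^ n * n.factorial := by
        rw [← Finset.prod_range_add_one_eq_factorial n]
        push_cast
        rw [mul_comm]
        congr 1
        exact Finset.prod_congr rfl fun m _ => by ring

-- partition facts
variable {k : ℕ} (η : Nat.Partition k)

lemma dparts_length : (dparts η).length = plen η := by
  simp [dparts, plen]

lemma dparts_sorted : (dparts η).Pairwise (· ≥ ·) := by
  unfold dparts
  rw [List.pairwise_reverse]
  exact Multiset.pairwise_sort η.parts (· ≤ ·)

lemma npart_eq_get {i : ℕ} (h1 : 1 ≤ i) (hi : i ≤ plen η) :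
    npart η i = (dparts η)[i-1]'(by rw [dparts_length]; omega) := by
  unfold npart
  exact List.getD_eq_getElem _ _ _

lemma npart_anti {i j : ℕ} (h1 : 1 ≤ i) (hij : i ≤ j) (hj : j ≤ plen η) :
    npart η j ≤ npart η i := by
  rcases eq_or_lt_of_le hij with rfl | hlt
  · exact le_refl _
  · rw [npart_eq_get η h1 (le_trans hij hj), npart_eq_get η (le_trans h1 hij) hj]
    have := (List.pairwise_iff_getElem).1 (dparts_sorted η) (i-1) (j-1)
      (by rw [dparts_length]; omega) (by rw [dparts_length]; omega) (by omega)
    exact this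

lemma npart_mem {i : ℕ} (h1 : 1 ≤ i) (hi : i ≤ plen η) : npart η i ∈ η.parts := by
  rw [npart_eq_get η h1 hi]
  have : (dparts η)[i-1]'(by rw [dparts_length]; omega) ∈ dparts η := List.getElem_mem _
  unfold dparts at this
  rw [List.mem_reverse, Multiset.mem_sort] at this
  exact this

lemma npart_pos {i : ℕ} (h1 : 1 ≤ i) (hi : i ≤ plen η) : 0 < npart η i :=
  η.parts_pos (npart_mem η h1 hi)

lemma list_sum_getD (L : List ℕ) : ∑ j ∈ Finset.range L.length, L.getD j 0 = L.sum := by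
  induction L with
  | nil => simp
  | cons a t ih =>
    rw [List.length_cons, Finset.sum_range_succ']
    simp only [List.getD_cons_succ, List.getD_cons_zero, List.sum_cons, ih]
    omega

lemma sum_npart : ∑ i ∈ Finset.Icc 1 (plen η), npart η i = k := by
  have h1 : Finset.Icc 1 (plen η) = Finset.Ico 1 (plen η + 1) := by
    rw [Finset.Ico_add_one_right_eq_Icc]
  rw [h1, Finset.sum_Ico_eq_sum_range]
  have h2 : ∀ j, npart η (1 + j) = (dparts η).getD j 0 := by
    intro j; unfold npart; congr 1; omega
  simp only [h2, Nat.add_sub_cancel]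
  rw [← dparts_length η, list_sum_getD]
  unfold dparts
  rw [List.sum_reverse]
  have : ((η.parts.sort (· ≤ ·) : List ℕ) : Multiset ℕ).sum = η.parts.sum := by
    rw [Multiset.sort_eq]
  rw [← Multiset.sum_coe, this, η.parts_sum]

lemma plen_pos (hk : 0 < k) : 0 < plen η := by
  rcases Nat.eq_zero_or_pos (plen η) with h | h
  · exfalso
    have hp : η.parts = 0 := Multiset.card_eq_zero.mp h
    have hs := η.parts_sum
    rw [hp] at hs
    simp at hs
    omega
  · exact h



lemma sum_tsub_telescope (e : ℕ → ℕ) : ∀ ℓ : ℕ, 1 ≤ ℓ →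
    (∀ i j, 1 ≤ i → i ≤ j → j ≤ ℓ → e j ≤ e i) →
    ∑ j ∈ Finset.Icc 2 ℓ, (e (j - 1) - e j) = e 1 - e ℓ := by
  intro ℓ
  induction ℓ with
  | zero => omega
  | succ n ih =>
    intro _ hmono
    rcases Nat.eq_zero_or_pos n with rfl | hn
    · simp
    · rw [Finset.sum_Icc_succ_top (by omega : 2 ≤ n + 1),
        ih hn (fun i j h1 hij hj => hmono i j h1 hij (by omega))]
      have h1 : e (n + 1) ≤ e n := hmono n (n + 1) hn (by omega) le_rfl
      have h2 : e n ≤ e 1 := hmono 1 n le_rfl hn (by omega)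
      simp only [Nat.add_sub_cancel]
      omega

lemma Icc_one_eq_insert {ℓ : ℕ} (hℓ : 1 ≤ ℓ) :
    Finset.Icc 1 ℓ = insert 1 (Finset.Icc 2 ℓ) := by
  ext x; simp only [Finset.mem_Icc, Finset.mem_insert]; omega

lemma prod_Icc_one_split {M : Type*} [CommMonoid M] {ℓ : ℕ} (hℓ : 1 ≤ ℓ) (f : ℕ → M) :
    ∏ i ∈ Finset.Icc 1 ℓ, f i = f 1 * ∏ i ∈ Finset.Icc 2 ℓ, f i := by
  rw [Icc_one_eq_insert hℓ, Finset.prod_insert (by simp)]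

lemma sum_Icc_one_split {ℓ : ℕ} (hℓ : 1 ≤ ℓ) (f : ℕ → ℕ) :
    ∑ i ∈ Finset.Icc 1 ℓ, f i = f 1 + ∑ i ∈ Finset.Icc 2 ℓ, f i := by
  rw [Icc_one_eq_insert hℓ, Finset.sum_insert (by simp)]

lemma prod_Icc_top_split {M : Type*} [CommMonoid M] {a ℓ : ℕ} (ha : a ≤ ℓ) (h1 : 1 ≤ ℓ) (f : ℕ → M) :
    ∏ i ∈ Finset.Icc a ℓ, f i = (∏ i ∈ Finset.Icc a (ℓ - 1), f i) * f ℓ := by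
  obtain ⟨m, rfl⟩ : ∃ m, ℓ = m + 1 := ⟨ℓ - 1, by omega⟩
  rw [Finset.prod_Icc_succ_top (by omega), Nat.add_sub_cancel]

lemma sum_Icc_top_split {a ℓ : ℕ} (ha : a ≤ ℓ) (h1 : 1 ≤ ℓ) (f : ℕ → ℕ) :
    ∑ i ∈ Finset.Icc a ℓ, f i = (∑ i ∈ Finset.Icc a (ℓ - 1), f i) + f ℓ := by
  obtain ⟨m, rfl⟩ : ∃ m, ℓ = m + 1 := ⟨ℓ - 1, by omega⟩
  rw [Finset.sum_Icc_succ_top (by omega), Nat.add_sub_cancel]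

/-- Split off the adjacent diagonal `i = j - 1` from the double pair product. -/
lemma prod_pairs_split {M : Type*} [CommMonoid M] {ℓ : ℕ} (F : ℕ → ℕ → M) :
    (∏ j ∈ Finset.Icc 1 ℓ, ∏ i ∈ Finset.Ico 1 j, F i j)
      = (∏ j ∈ Finset.Icc 1 ℓ, ∏ i ∈ Finset.Ico 1 (j - 1), F i j)
        * ∏ j ∈ Finset.Icc 2 ℓ, F (j - 1) j := by
  have inner : ∀ j ∈ Finset.Icc 1 ℓ,
      ∏ i ∈ Finset.Ico 1 j, F i j
        = (∏ i ∈ Finset.Ico 1 (j - 1), F i j) * (if 2 ≤ j then F (j - 1) j else 1) := by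
    intro j hj
    rcases Nat.lt_or_ge j 2 with h | h
    · have hj1 : j = 1 := by simp at hj; omega
      subst hj1; simp
    · rw [if_pos h]
      obtain ⟨m, rfl⟩ : ∃ m, j = m + 1 := ⟨j - 1, by omega⟩
      rw [Nat.add_sub_cancel, Finset.prod_Ico_succ_top (by omega : 1 ≤ m)]
  rw [Finset.prod_congr rfl inner, Finset.prod_mul_distrib]
  congr 1
  rw [← Finset.prod_subset (Finset.Icc_subset_Icc (by omega) le_rfl :
        Finset.Icc 2 ℓ ⊆ Finset.Icc 1 ℓ)]
  · exact Finset.prod_congr rfl fun j hj => if_pos (Finset.mem_Icc.mp hj).1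
  · intro x hx hnx
    simp only [Finset.mem_Icc] at hx hnx
    rw [if_neg]
    omega


lemma continuousAt_finset_prod {s : Finset ℕ} {F : ℕ → ℝ → ℝ}
    (h : ∀ i ∈ s, ContinuousAt (F i) 0) :
    ContinuousAt (fun u : ℝ => ∏ i ∈ s, F i u) 0 :=
  tendsto_finset_prod s h

lemma ratio_norm (c d : ℝ) {β : ℝ} (hβ : β ≠ 0) :
    (c * β + d) / (c * β) = (c + d * β⁻¹) / c := by
  rw [show c * β + d = β * (c + d * β⁻¹) from by field_simp,
    show c * β = β * c from mul_comm _ _, mul_div_mul_left _ _ hβ]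

lemma assemble2 {β : ℝ} (hβ : β ≠ 0) (k a b c : ℕ) (hc : a + b = c)
    (X1 X2 Y2 X3 X4 Y4 Xa : ℝ) :
    β ^ k * ((β ^ k * (β ^ c)⁻¹ * X1) * (X2 * (β ^ a * Y2)) * ((β ^ k)⁻¹ * X3) *
      (X4 * (β ^ b * Y4)) * ((β ^ k)⁻¹ * Xa))
      = X1 * (X2 * Y2) * X3 * (X4 * Y4) * Xa := by
  subst hc
  rw [pow_add]
  field_simp

lemma assemble1 {β : ℝ} (hβ : β ≠ 0) (k : ℕ) (P M : ℝ) :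
    β ^ k * (β ^ k * (2:ℝ)⁻¹ ^ k * ((β ^ k)⁻¹ * P) * ((β ^ k)⁻¹ * M))
      = (2:ℝ)⁻¹ ^ k * P * M := by
  have h : (β : ℝ) ^ k ≠ 0 := pow_ne_zero _ hβ
  field_simp
lemma core (ν : ℝ) (hν : -1 < ν) (k : ℕ) (hk : 0 < k) (ℓ : ℕ) (e : ℕ → ℕ)
    (hℓ : 1 ≤ ℓ)
    (hanti : ∀ i j, 1 ≤ i → i ≤ j → j ≤ ℓ → e j ≤ e i)
    (hpos : ∀ i, 1 ≤ i → i ≤ ℓ → 1 ≤ e i)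
    (hsum : ∑ i ∈ Finset.Icc 1 ℓ, e i = k) :
    Tendsto (fun β : ℝ =>
      β ^ k *
      ((((k : ℝ) * ((e 1 - 1).factorial : ℝ) * (β / 2) ^ k /
            rf ((β / 2) * ((ℓ : ℝ) - 1) + 1) (e 1)) *
        (∏ i ∈ Finset.Icc 2 ℓ,
            rf ((β / 2) * (1 - (i : ℝ))) (e i) / rf ((β / 2) * ((ℓ : ℝ) - i) + 1) (e i)) *
        (∏ i ∈ Finset.Icc 1 ℓ, (rf ((β / 2) * ((ℓ : ℝ) - i + 1)) (e i))⁻¹) *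
        (∏ j ∈ Finset.Icc 1 ℓ, ∏ i ∈ Finset.Ico 1 j,
            (((β / 2) * ((j : ℝ) - i) + (e i : ℝ) - (e j : ℝ)) / ((β / 2) * ((j : ℝ) - i))) *
              (rf ((β / 2) * ((j : ℝ) - i + 1)) (e i - e j) /
                rf ((β / 2) * ((j : ℝ) - i - 1) + 1) (e i - e j)))) *
        (∏ i ∈ Finset.Icc 1 ℓ,
            rfneg ((β / 2) * (ν + 1) + 1 + (β / 2) * ((i : ℝ) - 1)) (e i)))) atTop
      (nhds
        ((2 ^ k * (k : ℝ) * (((e 1 - 1).factorial : ℝ) / ((e ℓ).factorial : ℝ)) *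
            (-1) ^ (k - e 1) *
          (∏ i ∈ Finset.Icc 2 ℓ, ((i : ℝ) - 1) ^ (e i)) *
          (∏ i ∈ Finset.Icc 1 (ℓ - 1), (((ℓ : ℝ) - i) ^ (e i))⁻¹) *
          (∏ i ∈ Finset.Icc 1 ℓ, (((ℓ : ℝ) - i + 1) ^ (e i))⁻¹) *
          (∏ i ∈ Finset.Icc 2 ℓ, (((e (i - 1) - e i).factorial : ℝ))⁻¹) *
          (∏ q ∈ Finset.Icc 1 ℓ, ∏ p ∈ Finset.Ico 1 q, ((q : ℝ) - p + 1) ^ (e p - e q)) *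
          (∏ q ∈ Finset.Icc 3 ℓ, ∏ p ∈ Finset.Icc 1 (q - 2),
              ((q : ℝ) - p - 1) ^ ((e q : ℤ) - (e p : ℤ)))) *
         ∏ i ∈ Finset.Icc 1 ℓ, (((i : ℝ) + ν) ^ (e i))⁻¹)) := by
  rcases eq_or_lt_of_le hℓ with hc1 | hc2
  · -- case ℓ = 1
    subst hc1
    have he1 : e 1 = k := by simpa using hsum
    have hν1 : (ν : ℝ) + 1 ≠ 0 := by linarith
    have hkfac : ((k.factorial : ℝ)) ≠ 0 := Nat.cast_ne_zero.mpr (Nat.factorial_ne_zero k)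
    have hfac : ((k : ℝ)) * ((k - 1).factorial : ℝ) = (k.factorial : ℝ) := by
      exact_mod_cast Nat.mul_factorial_pred hk.ne'
    have hlim : Tendsto (fun β : ℝ =>
        (2 : ℝ)⁻¹ ^ k * (qp (1/2) 0 k β⁻¹)⁻¹ * (qm ((ν+1)/2) 0 k β⁻¹)⁻¹) atTop
        (nhds ((2 : ℝ)⁻¹ ^ k * (((1/2 : ℝ)) ^ k)⁻¹ * ((((ν+1)/2 : ℝ)) ^ k)⁻¹)) := by
      have hc : ContinuousAt (fun u : ℝ =>
          (2 : ℝ)⁻¹ ^ k * (qp (1/2) 0 k u)⁻¹ * (qm ((ν+1)/2) 0 k u)⁻¹) 0 := by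
        refine ContinuousAt.mul (ContinuousAt.mul continuousAt_const
          (((continuous_qp _ _ _).continuousAt).inv₀ ?_))
          (((continuous_qm _ _ _).continuousAt).inv₀ ?_)
        · rw [qp_zero]; exact pow_ne_zero _ (by norm_num)
        · rw [qm_zero]; exact pow_ne_zero _ (by positivity)
      have h2 := hc.tendsto.comp tendsto_inv_atTop_zero
      simpa [qp_zero, qm_zero, Function.comp_def] using h2
    convert Tendsto.congr' ?_ hlim using 2
    · -- point equality
      have h21 : Finset.Icc 2 1 = (∅ : Finset ℕ) := by decide
      have h31 : Finset.Icc 3 1 = (∅ : Finset ℕ) := by decide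
      have h10 : Finset.Icc 1 (1 - 1) = (∅ : Finset ℕ) := by decide
      rw [h21, h31, h10]
      simp only [Finset.prod_empty, Finset.Icc_self, Finset.prod_singleton,
        Finset.Ico_self, Nat.cast_one, mul_one, one_mul, he1]
      rw [← hfac]
      have hk0 : ((k:ℝ)) ≠ 0 := Nat.cast_ne_zero.mpr (by omega)
      have hfk : (((k-1).factorial : ℝ)) ≠ 0 := Nat.cast_ne_zero.mpr (Nat.factorial_ne_zero _)
      have hx : (1:ℝ) + ν ≠ 0 := by linarith
      field_simp
      rw [Nat.sub_self, pow_zero, mul_one, ← mul_pow, sub_self, zero_add, one_pow, one_mul]; congr 1; ring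
    · -- eventual equality
      filter_upwards [eventually_gt_atTop (0 : ℝ)] with β hβ
      have hβ0 : β ≠ 0 := ne_of_gt hβ
      have h21 : Finset.Icc 2 1 = (∅ : Finset ℕ) := by decide
      simp only [h21, Finset.prod_empty, Finset.Icc_self, Finset.prod_singleton,
        Finset.Ico_self, Nat.cast_one, mul_one, one_mul]
      have a1 : (β / 2) * ((1 : ℝ) - 1) + 1 = (1 : ℝ) := by ring
      have a2 : (β / 2) * ((1 : ℝ) - 1 + 1) = (1/2 : ℝ) * β + 0 := by ring
      have a3 : (β / 2) * (ν + 1) + 1 + (β / 2) * ((1 : ℝ) - 1) = ((ν+1)/2) * β + 1 := by ring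
      rw [a1, rf_one, a2, rf_norm _ _ _ hβ0, a3, rfneg_norm _ _ _ hβ0, he1, hfac,
        mul_div_cancel_left₀ _ hkfac, div_eq_mul_inv β 2, mul_pow, mul_inv, mul_inv,
        show (1:ℝ) - 1 = (0:ℝ) from by norm_num]
      exact (assemble1 hβ0 k _ _).symm
  · -- case 2 ≤ ℓ
    have hℓ2 : 2 ≤ ℓ := hc2
    have hℓR : (1:ℝ) < (ℓ:ℝ) := by exact_mod_cast hc2
    have heℓ1 : e ℓ ≤ e 1 := hanti 1 ℓ le_rfl (by omega) le_rfl
    have hdsum : ∑ j ∈ Finset.Icc 2 ℓ, (e (j-1) - e j) = e 1 - e ℓ :=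
      sum_tsub_telescope e ℓ (by omega) hanti
    set G : ℝ → ℝ := fun u =>
      ((2:ℝ)⁻¹ ^ k * ((k:ℝ) * ((e 1 - 1).factorial : ℝ) / qp (((ℓ:ℝ)-1)/2) 1 (e 1) u)) *
      ((∏ i ∈ Finset.Icc 2 (ℓ-1), qp ((1-(i:ℝ))/2) 0 (e i) u / qp (((ℓ:ℝ)-(i:ℝ))/2) 1 (e i) u) *
        (qp ((1-(ℓ:ℝ))/2) 0 (e ℓ) u / ((e ℓ).factorial : ℝ))) *
      (∏ i ∈ Finset.Icc 1 ℓ, (qp (((ℓ:ℝ)-(i:ℝ)+1)/2) 0 (e i) u)⁻¹) *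
      ((∏ j ∈ Finset.Icc 1 ℓ, ∏ i ∈ Finset.Ico 1 (j-1),
          ((((j:ℝ)-(i:ℝ))/2 + ((e i : ℝ) - (e j : ℝ)) * u) / (((j:ℝ)-(i:ℝ))/2)) *
            (qp (((j:ℝ)-(i:ℝ)+1)/2) 0 (e i - e j) u / qp (((j:ℝ)-(i:ℝ)-1)/2) 1 (e i - e j) u)) *
        (∏ j ∈ Finset.Icc 2 ℓ, ((1/2 + ((e (j-1) : ℝ) - (e j : ℝ)) * u) / (1/2 : ℝ)) *
          (qp 1 0 (e (j-1) - e j) u / ((e (j-1) - e j).factorial : ℝ)))) *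
      (∏ i ∈ Finset.Icc 1 ℓ, (qm ((ν+(i:ℝ))/2) 0 (e i) u)⁻¹) with hGdef
    have hcont : ContinuousAt G 0 := by
      rw [hGdef]
      refine ContinuousAt.mul (ContinuousAt.mul (ContinuousAt.mul (ContinuousAt.mul
        ?_ ?_) ?_) ?_) ?_
      · -- X1
        refine continuousAt_const.mul (ContinuousAt.div continuousAt_const
          (continuous_qp _ _ _).continuousAt ?_)
        rw [qp_zero]
        exact pow_ne_zero _ (ne_of_gt (by linarith : (0:ℝ) < ((ℓ:ℝ)-1)/2))
      · -- X2 * Y2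
        refine ContinuousAt.mul (continuousAt_finset_prod fun i hi => ?_)
          (((continuous_qp _ _ _).continuousAt).div_const _)
        simp only [Finset.mem_Icc] at hi
        refine ContinuousAt.div (continuous_qp _ _ _).continuousAt
          (continuous_qp _ _ _).continuousAt ?_
        rw [qp_zero]
        have : (i:ℝ) + 1 ≤ (ℓ:ℝ) := by
          have : i + 1 ≤ ℓ := by omega
          exact_mod_cast this
        exact pow_ne_zero _ (ne_of_gt (by linarith : (0:ℝ) < ((ℓ:ℝ)-(i:ℝ))/2))
      · -- X3
        refine continuousAt_finset_prod fun i hi => ((continuous_qp _ _ _).continuousAt).inv₀ ?_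
        simp only [Finset.mem_Icc] at hi
        rw [qp_zero]
        have : (i:ℝ) ≤ (ℓ:ℝ) := by exact_mod_cast hi.2
        exact pow_ne_zero _ (ne_of_gt (by linarith : (0:ℝ) < ((ℓ:ℝ)-(i:ℝ)+1)/2))
      · -- X4 * Y4
        refine ContinuousAt.mul
          (continuousAt_finset_prod fun j hj => continuousAt_finset_prod fun i hi => ?_)
          (continuousAt_finset_prod fun j hj => ?_)
        · simp only [Finset.mem_Icc, Finset.mem_Ico] at hj hi
          have h2 : (i:ℝ) + 2 ≤ (j:ℝ) := by
            have : i + 2 ≤ j := by omega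
            exact_mod_cast this
          refine ContinuousAt.mul (ContinuousAt.div
            (continuousAt_const.add (continuousAt_const.mul continuousAt_id))
            continuousAt_const (ne_of_gt (by linarith : (0:ℝ) < ((j:ℝ)-(i:ℝ))/2))) ?_
          refine ContinuousAt.div (continuous_qp _ _ _).continuousAt
            (continuous_qp _ _ _).continuousAt ?_
          rw [qp_zero]
          exact pow_ne_zero _ (ne_of_gt (by linarith : (0:ℝ) < ((j:ℝ)-(i:ℝ)-1)/2))
        · refine ContinuousAt.mul (ContinuousAt.div
            (continuousAt_const.add (continuousAt_const.mul continuousAt_id))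
            continuousAt_const (by norm_num)) (((continuous_qp _ _ _).continuousAt).div_const _)
      · -- Xα
        refine continuousAt_finset_prod fun i hi => ((continuous_qm _ _ _).continuousAt).inv₀ ?_
        simp only [Finset.mem_Icc] at hi
        rw [qm_zero]
        have : (1:ℝ) ≤ (i:ℝ) := by exact_mod_cast hi.1
        exact pow_ne_zero _ (ne_of_gt (by linarith : (0:ℝ) < (ν+(i:ℝ))/2))
    have hlim : Tendsto (fun β : ℝ => G β⁻¹) atTop (nhds (G 0)) :=
      hcont.tendsto.comp tendsto_inv_atTop_zero
    convert Tendsto.congr' ?_ hlim using 2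
    · -- point equality : TARGET = G 0
      simp only [hGdef, qp_zero, qm_zero, mul_zero, add_zero, one_pow]
      have hs1 : e 1 + ∑ i ∈ Finset.Icc 2 ℓ, e i = k := by
        rw [← sum_Icc_one_split hℓ e]; exact hsum
      have hs2 : ∑ i ∈ Finset.Icc 2 ℓ, e i = (∑ i ∈ Finset.Icc 2 (ℓ-1), e i) + e ℓ :=
        sum_Icc_top_split hℓ2 (by omega) e
      have hse' : (∑ i ∈ Finset.Icc 2 (ℓ-1), e i) + e ℓ = k - e 1 := by omega
      -- blocks for the G-0 side
      have gX1 : (k:ℝ) * ((e 1 - 1).factorial : ℝ) / (((ℓ:ℝ)-1)/2)^(e 1)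
          = (k:ℝ) * ((e 1 - 1).factorial : ℝ) * 2^(e 1) * ((((ℓ:ℝ)-1))^(e 1))⁻¹ := by
        rw [div_pow, div_div_eq_mul_div, div_eq_mul_inv]
      have gX2 : (∏ i ∈ Finset.Icc 2 (ℓ-1),
            ((1-(i:ℝ))/2)^(e i) / (((ℓ:ℝ)-(i:ℝ))/2)^(e i))
          = (-1:ℝ)^(∑ i ∈ Finset.Icc 2 (ℓ-1), e i) *
            ((∏ i ∈ Finset.Icc 2 (ℓ-1), ((i:ℝ)-1)^(e i)) *
             (∏ i ∈ Finset.Icc 2 (ℓ-1), ((((ℓ:ℝ)-(i:ℝ)))^(e i))⁻¹)) := by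
        have step : ∀ i ∈ Finset.Icc 2 (ℓ-1),
            ((1-(i:ℝ))/2)^(e i) / (((ℓ:ℝ)-(i:ℝ))/2)^(e i)
            = (-1:ℝ)^(e i) * (((i:ℝ)-1)^(e i) * ((((ℓ:ℝ)-(i:ℝ)))^(e i))⁻¹) := by
          intro i hi
          rw [← div_pow, div_div_div_comm, show (2:ℝ)/2 = 1 from by norm_num, div_one,
            show (1:ℝ)-(i:ℝ) = -((i:ℝ)-1) from by ring, neg_div, neg_pow, div_pow,
            div_eq_mul_inv]
        rw [Finset.prod_congr rfl step, Finset.prod_mul_distrib, Finset.prod_mul_distrib,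
          Finset.prod_pow_eq_pow_sum]
      have gY2 : ((1-(ℓ:ℝ))/2)^(e ℓ) / ((e ℓ).factorial : ℝ)
          = (-1:ℝ)^(e ℓ) * (((ℓ:ℝ)-1)^(e ℓ) * ((2:ℝ)^(e ℓ))⁻¹) * (((e ℓ).factorial : ℝ))⁻¹ := by
        rw [show (1-(ℓ:ℝ))/2 = -(((ℓ:ℝ)-1)/2) from by ring, neg_pow, div_pow,
          div_eq_mul_inv, div_eq_mul_inv]
      have gX3 : (∏ i ∈ Finset.Icc 1 ℓ, ((((ℓ:ℝ)-(i:ℝ)+1)/2)^(e i))⁻¹)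
          = (2:ℝ)^k * (∏ i ∈ Finset.Icc 1 ℓ, ((((ℓ:ℝ)-(i:ℝ)+1))^(e i))⁻¹) := by
        have step : ∀ i ∈ Finset.Icc 1 ℓ, ((((ℓ:ℝ)-(i:ℝ)+1)/2)^(e i))⁻¹
            = (2:ℝ)^(e i) * ((((ℓ:ℝ)-(i:ℝ)+1))^(e i))⁻¹ := by
          intro i hi
          rw [div_pow, inv_div, div_eq_mul_inv]
        rw [Finset.prod_congr rfl step, Finset.prod_mul_distrib,
          Finset.prod_pow_eq_pow_sum, hsum]
      have gX4 : (∏ j ∈ Finset.Icc 1 ℓ, ∏ i ∈ Finset.Ico 1 (j-1),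
            ((((j:ℝ)-(i:ℝ))/2) / (((j:ℝ)-(i:ℝ))/2)) *
              ((((j:ℝ)-(i:ℝ)+1)/2)^(e i - e j) / (((j:ℝ)-(i:ℝ)-1)/2)^(e i - e j)))
          = ∏ j ∈ Finset.Icc 1 ℓ, ∏ i ∈ Finset.Ico 1 (j-1),
              ((j:ℝ)-(i:ℝ)+1)^(e i - e j) * ((((j:ℝ)-(i:ℝ)-1))^(e i - e j))⁻¹ := by
        refine Finset.prod_congr rfl fun j hj => Finset.prod_congr rfl fun i hi => ?_
        simp only [Finset.mem_Icc, Finset.mem_Ico] at hj hi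
        have h2 : (i:ℝ) + 2 ≤ (j:ℝ) := by
          have : i + 2 ≤ j := by omega
          exact_mod_cast this
        rw [div_self (ne_of_gt (by linarith : (0:ℝ) < ((j:ℝ)-(i:ℝ))/2)), one_mul,
          ← div_pow, div_div_div_comm, show (2:ℝ)/2 = 1 from by norm_num, div_one,
          div_pow, div_eq_mul_inv]
      have gY4 : (∏ j ∈ Finset.Icc 2 ℓ,
            (1/2/(1/2 : ℝ)) * (1 / ((e (j-1) - e j).factorial : ℝ)))
          = ∏ j ∈ Finset.Icc 2 ℓ, (((e (j-1) - e j).factorial : ℝ))⁻¹ := by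
        refine Finset.prod_congr rfl fun j hj => ?_
        norm_num
      have gXα : (∏ i ∈ Finset.Icc 1 ℓ, (((ν+(i:ℝ))/2)^(e i))⁻¹)
          = (2:ℝ)^k * (∏ i ∈ Finset.Icc 1 ℓ, ((((i:ℝ)+ν))^(e i))⁻¹) := by
        have step : ∀ i ∈ Finset.Icc 1 ℓ, (((ν+(i:ℝ))/2)^(e i))⁻¹
            = (2:ℝ)^(e i) * ((((i:ℝ)+ν))^(e i))⁻¹ := by
          intro i hi
          rw [show (ν+(i:ℝ))/2 = ((i:ℝ)+ν)/2 from by ring, div_pow, inv_div, div_eq_mul_inv]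
        rw [Finset.prod_congr rfl step, Finset.prod_mul_distrib,
          Finset.prod_pow_eq_pow_sum, hsum]
      -- blocks for the target side
      have hE : (∏ q ∈ Finset.Icc 1 ℓ, ∏ p ∈ Finset.Ico 1 q, ((q:ℝ)-(p:ℝ)+1)^(e p - e q))
          = (∏ q ∈ Finset.Icc 1 ℓ, ∏ p ∈ Finset.Ico 1 (q-1), ((q:ℝ)-(p:ℝ)+1)^(e p - e q)) *
            (2:ℝ)^(e 1 - e ℓ) := by
        rw [prod_pairs_split]
        congr 1
        have step : ∀ q ∈ Finset.Icc 2 ℓ,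
            ((q:ℝ)-((q-1:ℕ):ℝ)+1)^(e (q-1) - e q) = (2:ℝ)^(e (q-1) - e q) := by
          intro q hq
          simp only [Finset.mem_Icc] at hq
          rw [Nat.cast_sub (by omega), Nat.cast_one,
            show (q:ℝ)-((q:ℝ)-1)+1 = 2 from by ring]
        rw [Finset.prod_congr rfl step, Finset.prod_pow_eq_pow_sum, hdsum]
      have hF : (∏ q ∈ Finset.Icc 3 ℓ, ∏ p ∈ Finset.Icc 1 (q-2),
            ((q:ℝ)-(p:ℝ)-1)^((e q : ℤ) - (e p : ℤ)))
          = ∏ q ∈ Finset.Icc 1 ℓ, ∏ p ∈ Finset.Ico 1 (q-1),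
              ((((q:ℝ)-(p:ℝ)-1))^(e p - e q))⁻¹ := by
        rw [Finset.prod_subset (Finset.Icc_subset_Icc (by omega : 1 ≤ 3) le_rfl)
          (by
            intro x hx hnx
            simp only [Finset.mem_Icc] at hx hnx
            have : x - 2 = 0 := by omega
            rw [this]
            simp)]
        refine Finset.prod_congr rfl fun q hq => ?_
        rw [show Finset.Icc 1 (q-2) = Finset.Ico 1 (q-1) from by
          ext x; simp only [Finset.mem_Icc, Finset.mem_Ico]; omega]
        refine Finset.prod_congr rfl fun p hp => ?_
        simp only [Finset.mem_Icc, Finset.mem_Ico] at hq hp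
        have hle : e q ≤ e p := hanti p q (by omega) (by omega) (by omega)
        have hz : ((e q : ℤ) - (e p : ℤ)) = -(((e p - e q : ℕ)) : ℤ) := by omega
        rw [hz, zpow_neg, zpow_natCast]
      have hEF : (∏ q ∈ Finset.Icc 1 ℓ, ∏ p ∈ Finset.Ico 1 (q-1),
            ((q:ℝ)-(p:ℝ)+1)^(e p - e q)) *
          (∏ q ∈ Finset.Icc 1 ℓ, ∏ p ∈ Finset.Ico 1 (q-1),
            ((((q:ℝ)-(p:ℝ)-1))^(e p - e q))⁻¹)
          = ∏ q ∈ Finset.Icc 1 ℓ, ∏ p ∈ Finset.Ico 1 (q-1),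
              ((q:ℝ)-(p:ℝ)+1)^(e p - e q) * ((((q:ℝ)-(p:ℝ)-1))^(e p - e q))⁻¹ := by
        rw [← Finset.prod_mul_distrib]
        exact Finset.prod_congr rfl fun q _ => (Finset.prod_mul_distrib).symm
      trans ((-1:ℝ)^(k - e 1) * 2^k * (2:ℝ)^(e 1 - e ℓ) *
          ((k:ℝ) * ((e 1 - 1).factorial : ℝ)) * (((e ℓ).factorial : ℝ))⁻¹ *
          ((((ℓ:ℝ)-1)^(e 1))⁻¹ * ((ℓ:ℝ)-1)^(e ℓ)) *
          (∏ i ∈ Finset.Icc 2 (ℓ-1), ((i:ℝ)-1)^(e i)) *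
          (∏ i ∈ Finset.Icc 2 (ℓ-1), ((((ℓ:ℝ)-(i:ℝ)))^(e i))⁻¹) *
          (∏ i ∈ Finset.Icc 1 ℓ, ((((ℓ:ℝ)-(i:ℝ)+1))^(e i))⁻¹) *
          (∏ q ∈ Finset.Icc 1 ℓ, ∏ p ∈ Finset.Ico 1 (q-1),
              ((q:ℝ)-(p:ℝ)+1)^(e p - e q) * ((((q:ℝ)-(p:ℝ)-1))^(e p - e q))⁻¹) *
          (∏ j ∈ Finset.Icc 2 ℓ, (((e (j-1) - e j).factorial : ℝ))⁻¹) *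
          (∏ i ∈ Finset.Icc 1 ℓ, ((((i:ℝ)+ν))^(e i))⁻¹))
      · -- TARGET = FF
        rw [prod_Icc_top_split hℓ2 (by omega : 1 ≤ ℓ)
            (fun i => ((i:ℝ)-1)^(e i)),
          prod_Icc_one_split (by omega : 1 ≤ ℓ-1)
            (fun i => ((((ℓ:ℝ)-(i:ℝ)))^(e i))⁻¹),
          hE, hF, ← hEF]
        simp only [Nat.cast_one]
        ring
      · -- FF = G-0 form
        symm
        rw [gX1, gX2, gY2, gX3, gX4, gY4, gXα]
        conv_rhs => rw [show (-1:ℝ)^(k - e 1)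
            = (-1:ℝ)^(∑ i ∈ Finset.Icc 2 (ℓ-1), e i) * (-1:ℝ)^(e ℓ) from by
              rw [← pow_add, hse'],
          show (2:ℝ)^(e 1 - e ℓ) = 2^(e 1) * ((2:ℝ)^(e ℓ))⁻¹ from
            pow_sub₀ (2:ℝ) two_ne_zero heℓ1,
          show (2:ℝ)^k = (2:ℝ)⁻¹^k * ((2:ℝ)^k * (2:ℝ)^k) from by
            rw [inv_pow]
            field_simp]
        ring
    · -- eventual equality
      filter_upwards [eventually_gt_atTop (0:ℝ)] with β hβ
      have hβ0 : β ≠ 0 := ne_of_gt hβ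
      simp only [hGdef]
      have hT1 : (k:ℝ) * ((e 1 - 1).factorial : ℝ) * (β/2)^k /
            rf ((β/2) * ((ℓ:ℝ)-1) + 1) (e 1)
          = β^k * (β^(e 1))⁻¹ *
            ((2:ℝ)⁻¹^k * ((k:ℝ) * ((e 1 - 1).factorial : ℝ) /
              qp (((ℓ:ℝ)-1)/2) 1 (e 1) β⁻¹)) := by
        rw [show (β/2) * ((ℓ:ℝ)-1) + 1 = (((ℓ:ℝ)-1)/2) * β + 1 from by ring,
          rf_norm _ _ _ hβ0]
        ring
      have hT2 : (∏ i ∈ Finset.Icc 2 ℓ,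
            rf ((β/2)*(1-(i:ℝ))) (e i) / rf ((β/2)*((ℓ:ℝ)-(i:ℝ))+1) (e i))
          = (∏ i ∈ Finset.Icc 2 (ℓ-1),
              qp ((1-(i:ℝ))/2) 0 (e i) β⁻¹ / qp (((ℓ:ℝ)-(i:ℝ))/2) 1 (e i) β⁻¹) *
            (β^(e ℓ) * (qp ((1-(ℓ:ℝ))/2) 0 (e ℓ) β⁻¹ / ((e ℓ).factorial : ℝ))) := by
        rw [prod_Icc_top_split hℓ2 (by omega)]
        congr 1
        · refine Finset.prod_congr rfl fun i hi => ?_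
          rw [show (β/2)*(1-(i:ℝ)) = ((1-(i:ℝ))/2) * β + 0 from by ring, rf_norm _ _ _ hβ0,
            show (β/2)*((ℓ:ℝ)-(i:ℝ))+1 = (((ℓ:ℝ)-(i:ℝ))/2) * β + 1 from by ring,
            rf_norm _ _ _ hβ0,
            mul_div_mul_left _ _ (pow_ne_zero (e i) hβ0)]
        · rw [show (β/2)*(1-(ℓ:ℝ)) = ((1-(ℓ:ℝ))/2) * β + 0 from by ring, rf_norm _ _ _ hβ0,
            show (β/2)*((ℓ:ℝ)-(ℓ:ℝ))+1 = (1:ℝ) from by ring, rf_one]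
          ring
      have hT3 : (∏ i ∈ Finset.Icc 1 ℓ, (rf ((β/2)*((ℓ:ℝ)-(i:ℝ)+1)) (e i))⁻¹)
          = (β^k)⁻¹ * (∏ i ∈ Finset.Icc 1 ℓ, (qp (((ℓ:ℝ)-(i:ℝ)+1)/2) 0 (e i) β⁻¹)⁻¹) := by
        have step : ∀ i ∈ Finset.Icc 1 ℓ, (rf ((β/2)*((ℓ:ℝ)-(i:ℝ)+1)) (e i))⁻¹
            = (β^(e i))⁻¹ * (qp (((ℓ:ℝ)-(i:ℝ)+1)/2) 0 (e i) β⁻¹)⁻¹ := fun i hi => by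
          rw [show (β/2)*((ℓ:ℝ)-(i:ℝ)+1) = (((ℓ:ℝ)-(i:ℝ)+1)/2) * β + 0 from by ring,
            rf_norm _ _ _ hβ0, mul_inv]
        rw [Finset.prod_congr rfl step, Finset.prod_mul_distrib, Finset.prod_inv_distrib,
          Finset.prod_pow_eq_pow_sum, hsum]
      have hTα : (∏ i ∈ Finset.Icc 1 ℓ,
            rfneg ((β/2)*(ν+1) + 1 + (β/2)*((i:ℝ)-1)) (e i))
          = (β^k)⁻¹ * (∏ i ∈ Finset.Icc 1 ℓ, (qm ((ν+(i:ℝ))/2) 0 (e i) β⁻¹)⁻¹) := by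
        have step : ∀ i ∈ Finset.Icc 1 ℓ,
            rfneg ((β/2)*(ν+1) + 1 + (β/2)*((i:ℝ)-1)) (e i)
            = (β^(e i))⁻¹ * (qm ((ν+(i:ℝ))/2) 0 (e i) β⁻¹)⁻¹ := fun i hi => by
          rw [show (β/2)*(ν+1) + 1 + (β/2)*((i:ℝ)-1) = ((ν+(i:ℝ))/2) * β + 1 from by ring,
            rfneg_norm _ _ _ hβ0, show (1:ℝ) - 1 = 0 from by norm_num, mul_inv]
        rw [Finset.prod_congr rfl step, Finset.prod_mul_distrib, Finset.prod_inv_distrib,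
          Finset.prod_pow_eq_pow_sum, hsum]
      have hT4 : (∏ j ∈ Finset.Icc 1 ℓ, ∏ i ∈ Finset.Ico 1 j,
            (((β/2) * ((j:ℝ) - (i:ℝ)) + (e i : ℝ) - (e j : ℝ)) / ((β/2) * ((j:ℝ) - (i:ℝ)))) *
              (rf ((β/2) * ((j:ℝ) - (i:ℝ) + 1)) (e i - e j) /
                rf ((β/2) * ((j:ℝ) - (i:ℝ) - 1) + 1) (e i - e j)))
          = (∏ j ∈ Finset.Icc 1 ℓ, ∏ i ∈ Finset.Ico 1 (j-1),
              ((((j:ℝ)-(i:ℝ))/2 + ((e i : ℝ) - (e j : ℝ)) * β⁻¹) / (((j:ℝ)-(i:ℝ))/2)) *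
                (qp (((j:ℝ)-(i:ℝ)+1)/2) 0 (e i - e j) β⁻¹ /
                  qp (((j:ℝ)-(i:ℝ)-1)/2) 1 (e i - e j) β⁻¹)) *
            (β^(e 1 - e ℓ) * (∏ j ∈ Finset.Icc 2 ℓ,
              ((1/2 + ((e (j-1) : ℝ) - (e j : ℝ)) * β⁻¹) / (1/2 : ℝ)) *
                (qp 1 0 (e (j-1) - e j) β⁻¹ / ((e (j-1) - e j).factorial : ℝ)))) := by
        rw [prod_pairs_split]
        congr 1
        · refine Finset.prod_congr rfl fun j hj => Finset.prod_congr rfl fun i hi => ?_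
          rw [show (β/2) * ((j:ℝ)-(i:ℝ)) + (e i : ℝ) - (e j : ℝ)
                = (((j:ℝ)-(i:ℝ))/2) * β + ((e i : ℝ) - (e j : ℝ)) from by ring,
            show (β/2) * ((j:ℝ)-(i:ℝ)) = (((j:ℝ)-(i:ℝ))/2) * β from by ring]
          rw [ratio_norm _ _ hβ0,
            show (β/2) * ((j:ℝ)-(i:ℝ)+1) = (((j:ℝ)-(i:ℝ)+1)/2) * β + 0 from by ring,
            rf_norm _ _ _ hβ0,
            show (β/2) * ((j:ℝ)-(i:ℝ)-1)+1 = (((j:ℝ)-(i:ℝ)-1)/2) * β + 1 from by ring,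
            rf_norm _ _ _ hβ0,
            mul_div_mul_left _ _ (pow_ne_zero (e i - e j) hβ0)]
        · have step : ∀ j ∈ Finset.Icc 2 ℓ,
              (((β/2) * ((j:ℝ) - ((j-1 : ℕ):ℝ)) + (e (j-1) : ℝ) - (e j : ℝ)) /
                  ((β/2) * ((j:ℝ) - ((j-1 : ℕ):ℝ)))) *
                (rf ((β/2) * ((j:ℝ) - ((j-1 : ℕ):ℝ) + 1)) (e (j-1) - e j) /
                  rf ((β/2) * ((j:ℝ) - ((j-1 : ℕ):ℝ) - 1) + 1) (e (j-1) - e j))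
              = β^(e (j-1) - e j) *
                (((1/2 + ((e (j-1) : ℝ) - (e j : ℝ)) * β⁻¹) / (1/2 : ℝ)) *
                  (qp 1 0 (e (j-1) - e j) β⁻¹ / ((e (j-1) - e j).factorial : ℝ))) := by
            intro j hj
            simp only [Finset.mem_Icc] at hj
            rw [Nat.cast_sub (by omega : 1 ≤ j), Nat.cast_one]
            rw [show (β/2) * ((j:ℝ) - ((j:ℝ) - 1)) + (e (j-1) : ℝ) - (e j : ℝ)
                  = (1/2 : ℝ) * β + ((e (j-1) : ℝ) - (e j : ℝ)) from by ring,
              show (β/2) * ((j:ℝ) - ((j:ℝ) - 1)) = (1/2 : ℝ) * β from by ring]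
            rw [ratio_norm _ _ hβ0,
              show (β/2) * ((j:ℝ) - ((j:ℝ) - 1) + 1) = (1:ℝ) * β + 0 from by ring,
              rf_norm _ _ _ hβ0,
              show (β/2) * ((j:ℝ) - ((j:ℝ) - 1) - 1) + 1 = (1:ℝ) from by ring, rf_one]
            ring
          rw [Finset.prod_congr rfl step, Finset.prod_mul_distrib,
            Finset.prod_pow_eq_pow_sum, hdsum]
      rw [hT1, hT2, hT3, hT4, hTα]
      exact (assemble2 hβ0 k (e ℓ) (e 1 - e ℓ) (e 1) (by omega) _ _ _ _ _ _ _).symm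


lemma per_eta (ν : ℝ) (hν : -1 < ν) {k : ℕ} (hk : 0 < k) (η : Nat.Partition k) :
    Tendsto (fun β : ℝ => β ^ k * (AcoefLim β η * alphaMinus β ((β / 2) * (ν + 1)) η)) atTop
      (nhds (Ainf η * ∏ i ∈ Finset.Icc 1 (plen η), (((i : ℝ) + ν) ^ (npart η i))⁻¹)) := by
  exact core ν hν k hk (plen η) (npart η) (plen_pos η hk)
    (fun i j h1 hij hj => npart_anti η h1 hij hj)
    (fun i h1 hi => npart_pos η h1 hi)
    (sum_npart η)

end LagAux

/-- Low temperature limit of the hard-edge inverse moments `F^{(β)}`. -/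
theorem laguerre_hard_edge_low_temperature_limit (ν : ℝ) (hν : -1 < ν) (k : ℕ) (hk : 0 < k) :
    Tendsto (fun β : ℝ => β ^ k * Fbeta β k ((β / 2) * (ν + 1))) atTop
      (nhds (Mlim k ν)) := by
  have h3 : (fun β : ℝ => β ^ k * Fbeta β k ((β / 2) * (ν + 1)))
      = fun β : ℝ => ∑ η : Nat.Partition k,
          β ^ k * (AcoefLim β η * alphaMinus β ((β / 2) * (ν + 1)) η) := by
    funext β
    rw [Fbeta, Finset.mul_sum]
  rw [h3]
  exact tendsto_finset_sum _ (fun η _ => LagAux.per_eta ν hν hk η)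

end
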